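/- For every v ∈ (0, π), the phase-lag numerator of the phase-fitted method PF-D0 vanishes at v: 2·[cos(6v) + (−2 + v²·b1(v))·cos(5v) + (2 + v²·b2(v))·cos(4v) + (−1 + v²·b3(v))·cos(3v) + v²·b4(v)·cos(2v) + v²·b5(v)·cos(v)] + v²·b6(v) = 0. -/

import Mathlib

/-- The variable coefficient `b₁(v)` of the phase-fitted method PF-D0. -/
noncomputable def pfb1 (v : ℝ) : ℝ :=
  (((-124184636) * Real.cos v + 70378348 * Real.cos (2 * v) - 24862148 * Real.cos (3 * v)
        + 5153611 * Real.cos (4 * v)) * v ^ 2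
      + 25 * (3013169 * v ^ 2 - 16128 * Real.cos (3 * v) + 32256 * Real.cos (4 * v)
        - 32256 * Real.cos (5 * v) + 16128 * Real.cos (6 * v)))
    / (206438400 * v ^ 2 * (Real.sin (v / 2)) ^ 10)

/-- The variable coefficient `b₂(v)` of the phase-fitted method PF-D0. -/
noncomputable def pfb2 (v : ℝ) : ℝ :=
  (v ^ 2 * (159588050 * Real.cos v - 85350160 * Real.cos (2 * v)
        + 16708985 * Real.cos (3 * v) - 5153611 * Real.cos (5 * v))
      - 16 * (6496079 * v ^ 2 - 252000 * Real.cos (3 * v) + 504000 * Real.cos (4 * v)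
        - 504000 * Real.cos (5 * v) + 252000 * Real.cos (6 * v)))
    / (206438400 * v ^ 2 * (Real.sin (v / 2)) ^ 10)

/-- The variable coefficient `b₃(v)` of the phase-fitted method PF-D0. -/
noncomputable def pfb3 (v : ℝ) : ℝ :=
  (((-367257540) * Real.cos v + 183567900 * Real.cos (2 * v)
        - 16708985 * Real.cos (4 * v) + 24862148 * Real.cos (5 * v)) * v ^ 2
      + 81 * (3175117 * v ^ 2 - 224000 * Real.cos (3 * v) + 448000 * Real.cos (4 * v)
        - 448000 * Real.cos (5 * v) + 224000 * Real.cos (6 * v)))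
    / (206438400 * v ^ 2 * (Real.sin (v / 2)) ^ 10)

/-- The variable coefficient `b₄(v)` of the phase-fitted method PF-D0. -/
noncomputable def pfb4 (v : ℝ) : ℝ :=
  (30675810 * v ^ 2 * Real.cos v - 42958788 * v ^ 2
      + 75 * (161280 - 611893 * v ^ 2) * Real.cos (3 * v)
      + 140 * (152411 * v ^ 2 - 172800) * Real.cos (4 * v)
      + (24192000 - 17594587 * v ^ 2) * Real.cos (5 * v)
      - 12096000 * Real.cos (6 * v))
    / (51609600 * v ^ 2 * (Real.sin (v / 2)) ^ 10)

/-- The variable coefficient `b₅(v)` of the phase-fitted method PF-D0. -/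
noncomputable def pfb5 (v : ℝ) : ℝ :=
  ((-61351620) * v ^ 2 * Real.cos (2 * v) + 85936557 * v ^ 2
      + 30 * (6120959 * v ^ 2 - 1411200) * Real.cos (3 * v)
      + 25 * (3386880 - 3191761 * v ^ 2) * Real.cos (4 * v)
      + (62092318 * v ^ 2 - 84672000) * Real.cos (5 * v)
      + 42336000 * Real.cos (6 * v))
    / (103219200 * v ^ 2 * (Real.sin (v / 2)) ^ 10)

/-- The variable coefficient `b₆(v)` of the phase-fitted method PF-D0. -/
noncomputable def pfb6 (v : ℝ) : ℝ :=
  (((-171873114) * Real.cos v + 171835152 * Real.cos (2 * v)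
        - 257184477 * Real.cos (3 * v) + 103937264 * Real.cos (4 * v)
        - 75329225 * Real.cos (5 * v)) * v ^ 2
      + 50803200 * (Real.cos (3 * v) - 2 * Real.cos (4 * v)
        + 2 * Real.cos (5 * v) - Real.cos (6 * v)))
    / (103219200 * v ^ 2 * (Real.sin (v / 2)) ^ 10)

namespace Real

theorem cos_four_mul (x : ℝ) : cos (4 * x) = 8 * cos x ^ 4 - 8 * cos x ^ 2 + 1 := by
  rw [show 4 * x = 2 * (2 * x) by ring, cos_two_mul, cos_two_mul]; ring

theorem cos_five_mul (x : ℝ) : cos (5 * x) = 16 * cos x ^ 5 - 20 * cos x ^ 3 + 5 * cos x := by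
  have h := cos_add_cos (5 * x) (3 * x)
  rw [show (5 * x + 3 * x) / 2 = 4 * x by ring, show (5 * x - 3 * x) / 2 = x by ring,
    cos_four_mul, cos_three_mul] at h
  linear_combination h

theorem cos_six_mul (x : ℝ) :
    cos (6 * x) = 32 * cos x ^ 6 - 48 * cos x ^ 4 + 18 * cos x ^ 2 - 1 := by
  rw [show 6 * x = 2 * (3 * x) by ring, cos_two_mul, cos_three_mul]; ring

theorem sin_half_pow_ten (x : ℝ) : sin (x / 2) ^ 10 = ((1 - cos x) / 2) ^ 5 := by
  rw [show (10 : ℕ) = 2 * 5 from rfl, pow_mul, sin_sq_eq_half_sub, mul_div_cancel₀ x two_ne_zero]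
  ring

theorem cos_ne_one_of_mem_Ioo {x : ℝ} (hx : x ∈ Set.Ioo 0 (2 * π)) : cos x ≠ 1 := by
  rw [Ne, cos_eq_one_iff_of_lt_of_lt (by linarith [hx.1, pi_pos]) hx.2]
  exact hx.1.ne'

end Real

open Real in
/-- Writing every `cos (j * v)` as a Chebyshev polynomial in `cos v` and `sin (v / 2) ^ 10` as
`((1 - cos v) / 2) ^ 5`, clearing the denominators leaves a polynomial identity in `v` and
`cos v`. -/
theorem pfd0_phase_lag_numerator_eq_zero {v : ℝ} (hv : v ≠ 0) (hcos : cos v ≠ 1) :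
    2 * (cos (6 * v) + (-2 + v ^ 2 * pfb1 v) * cos (5 * v)
        + (2 + v ^ 2 * pfb2 v) * cos (4 * v)
        + (-1 + v ^ 2 * pfb3 v) * cos (3 * v)
        + v ^ 2 * pfb4 v * cos (2 * v)
        + v ^ 2 * pfb5 v * cos v)
      + v ^ 2 * pfb6 v = 0 := by
  have hcos' : 1 - cos v ≠ 0 := sub_ne_zero.2 hcos.symm
  rw [pfb1, pfb2, pfb3, pfb4, pfb5, pfb6, sin_half_pow_ten, cos_six_mul, cos_five_mul,
    cos_four_mul, cos_three_mul, cos_two_mul]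
  field_simp
  ring

/-- The phase-lag numerator of the phase-fitted method PF-D0 vanishes at the
fitting frequency `v` for every `v ∈ (0, π)`. -/
theorem pfd0_phase_lag_numerator_vanishes :
    ∀ v ∈ Set.Ioo (0 : ℝ) Real.pi,
      2 * (Real.cos (6 * v) + (-2 + v ^ 2 * pfb1 v) * Real.cos (5 * v)
          + (2 + v ^ 2 * pfb2 v) * Real.cos (4 * v)
          + (-1 + v ^ 2 * pfb3 v) * Real.cos (3 * v)
          + v ^ 2 * pfb4 v * Real.cos (2 * v)
          + v ^ 2 * pfb5 v * Real.cos v)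
        + v ^ 2 * pfb6 v = 0 := by
  intro v hv
  have hv₂π : v ∈ Set.Ioo 0 (2 * Real.pi) := ⟨hv.1, hv.2.trans (by linarith [Real.pi_pos])⟩
  exact pfd0_phase_lag_numerator_eq_zero hv.1.ne' (Real.cos_ne_one_of_mem_Ioo hv₂π)
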